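/- Let ψ : ℝ^n → ℝ^{2n-1} be ψ(v₁,…,v_{n-1},y) = (v₁,…,v_{n-1}, y², v₁y,…,v_{n-1}y), and fix 1 ≤ i ≤ n-1. Then the vector field η on ℝ^{2n-1} with η_W = 2X_i, η_{X_j} = V_i·V_j for all 1 ≤ j ≤ n-1, and all other components zero, is liftable over ψ, with lift ξ whose only nonzero source component is ξ_y = v_i. -/

import Mathlib

open ContinuousLinearMap

variable {ι : Type*} [Fintype ι]

/-- The map `ψ` of the statement, with target coordinates `(V, W, X)`. -/
def foldMap (q : (ι → ℝ) × ℝ) : (ι → ℝ) × ℝ × (ι → ℝ) :=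
  (q.1, q.2 ^ 2, fun m => q.1 m * q.2)

theorem hasFDerivAt_foldMap (p : (ι → ℝ) × ℝ) :
    HasFDerivAt foldMap
      ((fst ℝ _ ℝ).prod (((2 * p.2) • snd ℝ (ι → ℝ) ℝ).prod
        (pi fun m => p.1 m • snd ℝ (ι → ℝ) ℝ + p.2 • (proj m).comp (fst ℝ _ ℝ)))) p := by
  have hsnd : HasFDerivAt (fun q : (ι → ℝ) × ℝ => q.2) (snd ℝ (ι → ℝ) ℝ) p := hasFDerivAt_snd
  refine hasFDerivAt_fst.prodMk (HasFDerivAt.prodMk ?_ (hasFDerivAt_pi.mpr fun m => ?_))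
  · simpa using hsnd.pow 2
  · exact (((proj m).comp (fst ℝ _ ℝ)).hasFDerivAt).mul hsnd

theorem fderiv_foldMap_apply_vertical (p : (ι → ℝ) × ℝ) (t : ℝ) :
    fderiv ℝ foldMap p (0, t) = (0, 2 * p.2 * t, fun m => p.1 m * t) := by
  simp [(hasFDerivAt_foldMap p).fderiv]

theorem stmt9_general (n : ℕ) (i : Fin (n - 1)) :
    ∀ p : (Fin (n - 1) → ℝ) × ℝ,
      fderiv ℝ
          (fun q : (Fin (n - 1) → ℝ) × ℝ =>
            ((q.1, q.2 ^ 2, fun m => q.1 m * q.2) :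
              (Fin (n - 1) → ℝ) × ℝ × (Fin (n - 1) → ℝ)))
          p ((0 : Fin (n - 1) → ℝ), p.1 i)
        = ((0 : Fin (n - 1) → ℝ), 2 * (p.1 i * p.2),
            fun j => p.1 i * p.1 j) := by
  intro p
  have h := fderiv_foldMap_apply_vertical p (p.1 i)
  unfold foldMap at h
  rw [h]
  ext <;> dsimp <;> ring

/-- For ψ(v,y) = (v, y², v₁y,…,v_{n-1}y) and fixed index i, the vector field
η with η_W = 2X_i, η_{X_j} = V_i·V_j (all other components zero) is liftable
over ψ with lift ξ whose only nonzero component is ξ_y = v_i. -/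
theorem stmt9 (n : ℕ) (hn : 1 ≤ n) (i : Fin (n - 1)) :
    ∀ p : (Fin (n - 1) → ℝ) × ℝ,
      fderiv ℝ
          (fun q : (Fin (n - 1) → ℝ) × ℝ =>
            ((q.1, q.2 ^ 2, fun m => q.1 m * q.2) :
              (Fin (n - 1) → ℝ) × ℝ × (Fin (n - 1) → ℝ)))
          p ((0 : Fin (n - 1) → ℝ), p.1 i)
        = ((0 : Fin (n - 1) → ℝ), 2 * (p.1 i * p.2),
            fun j => p.1 i * p.1 j) :=
  stmt9_general n i
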